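/- The unit vector basis (e_i) of (c₀₀, ‖·‖) is 1-subsymmetric: for all finitely supported real scalars (α_i), all signs (θ_i) ∈ {−1, 1}^ℕ, and every strictly increasing sequence (n_i) in ℕ, one has ‖Σ_i θ_i α_i e_{n_i}‖ = ‖Σ_i α_i e_i‖. -/

import Mathlib

/-!
The implicit equation has at most one solution. For two solutions `N`, `N'` one shows
`N x ≤ N' x` by induction on the size of `supp x`: an admissible family `E₁ < ⋯ < E_m` either
cuts `x` into pieces of smaller support, where `N ≤ N'` by induction, or has one `E_i` containing
`supp x`, and then its average is `N x / f(m) ≤ N x / f(2)`, which cannot realise the supremum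
`N x` because `f(2) > 1`.

The operator `T : e_i ↦ θ_i e_{n_i}` is injective, preserves the sup norm and intertwines the
coordinate projections (`E(T x) = T ((n⁻¹ E) x)`, and `n⁻¹` preserves `<` on finite sets since `n`
is strictly increasing). Hence `N ∘ T` solves the same equation, so `N ∘ T = N`.
-/

abbrev c00 : Type := ℕ →₀ ℝ

noncomputable def flog (x : ℝ) : ℝ := Real.logb 2 (x + 1)

noncomputable def supNorm (x : c00) : ℝ := ⨆ i, |x i|

def proj (E : Finset ℕ) (x : c00) : c00 := x.filter (· ∈ E)

def FLt (A B : Finset ℕ) : Prop := ∀ a ∈ A, ∀ b ∈ B, a < b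

def IsNormC00 (N : c00 → ℝ) : Prop :=
  (∀ x, N x = 0 ↔ x = 0) ∧ (∀ x y, N (x + y) ≤ N x + N y) ∧
    ∀ (a : ℝ) (x : c00), N (a • x) = |a| * N x

def schSet (N : c00 → ℝ) (x : c00) : Set ℝ :=
  {s | ∃ n : ℕ, 2 ≤ n ∧ ∃ E : Fin n → Finset ℕ,
    (∀ i j : Fin n, i < j → FLt (E i) (E j)) ∧
    s = (flog n)⁻¹ * ∑ i, N (proj (E i) x)}

def IsSchlumprechtNorm (N : c00 → ℝ) : Prop :=
  IsNormC00 N ∧ ∀ x : c00, IsLUB (insert (supNorm x) (schSet N x)) (N x)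

def IsBlockSeq (x : ℕ → c00) : Prop :=
  (∀ n, x n ≠ 0) ∧ ∀ n, ∀ i ∈ (x n).support, ∀ j ∈ (x (n+1)).support, i < j

def SeqEquiv (N : c00 → ℝ) (u v : ℕ → c00) : Prop :=
  ∃ c : ℝ, 1 ≤ c ∧ ∀ a : ℕ →₀ ℝ,
    (1 / c) * N (a.sum fun i t => t • u i) ≤ N (a.sum fun i t => t • v i) ∧
    N (a.sum fun i t => t • v i) ≤ c * N (a.sum fun i t => t • u i)

section Projections

variable {E : Finset ℕ} {x : c00}

lemma proj_eq_self_of_support_subset (h : x.support ⊆ E) : proj E x = x :=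
  (Finsupp.filter_eq_self_iff _ _).2 fun _ hk => h (Finsupp.mem_support_iff.2 hk)

lemma proj_eq_zero_of_disjoint {F : Finset ℕ} (hEF : Disjoint E F) (h : x.support ⊆ E) :
    proj F x = 0 :=
  (Finsupp.filter_eq_zero_iff _ _).2 fun _ hk => Finsupp.notMem_support_iff.1
    fun hx => Finset.disjoint_left.1 hEF (h hx) hk

lemma card_support_proj_lt (h : ¬ x.support ⊆ E) :
    (proj E x).support.card < x.support.card := by
  refine Finset.card_lt_card (Finset.filter_ssubset.2 ?_)
  simpa [Finset.not_subset] using h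

lemma FLt.disjoint {A B : Finset ℕ} (h : FLt A B) : Disjoint A B :=
  Finset.disjoint_left.2 fun a ha hb => (h a ha a hb).false

lemma FLt.preimage {A B : Finset ℕ} (n : ℕ ↪o ℕ) (h : FLt A B) :
    FLt (A.preimage n n.injective.injOn) (B.preimage n n.injective.injOn) := fun _ ha _ hb =>
  n.lt_iff_lt.1 (h _ (Finset.mem_preimage.1 ha) _ (Finset.mem_preimage.1 hb))

lemma FLt.map {A B : Finset ℕ} (n : ℕ ↪o ℕ) (h : FLt A B) :
    FLt (A.map n.toEmbedding) (B.map n.toEmbedding) := by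
  simp only [FLt, Finset.mem_map, forall_exists_index, and_imp]
  rintro _ a ha rfl _ b hb rfl
  exact n.lt_iff_lt.2 (h a ha b hb)

end Projections

lemma one_lt_flog {m : ℕ} (hm : 2 ≤ m) : 1 < flog m := by
  have h : Real.logb 2 2 < Real.logb 2 (m + 1) :=
    Real.logb_lt_logb (by norm_num) (by norm_num) (by norm_cast; omega)
  rwa [Real.logb_self_eq_one (by norm_num)] at h

lemma inv_flog_le_inv_flog_two {m : ℕ} (hm : 2 ≤ m) : (flog m)⁻¹ ≤ (flog 2)⁻¹ :=
  inv_anti₀ (zero_lt_one.trans (one_lt_flog le_rfl)) <|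
    Real.logb_le_logb_of_le (by norm_num) (by norm_num) (by norm_cast; omega)

namespace IsNormC00

variable {N : c00 → ℝ}

lemma map_zero (hN : IsNormC00 N) : N 0 = 0 := (hN.1 0).2 rfl

lemma nonneg (hN : IsNormC00 N) (x : c00) : 0 ≤ N x := by
  have h := hN.2.1 x (-x)
  rw [add_neg_cancel, hN.map_zero, ← neg_one_smul ℝ x, hN.2.2, abs_neg, abs_one, one_mul] at h
  linarith

lemma comp_injective (hN : IsNormC00 N) {T : c00 →ₗ[ℝ] c00} (hT : Function.Injective T) :
    IsNormC00 (N ∘ T) := by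
  refine ⟨fun x => ?_, fun x y => ?_, fun a x => ?_⟩
  · rw [Function.comp_apply, hN.1, map_eq_zero_iff T hT]
  · simpa only [Function.comp_apply, map_add] using hN.2.1 (T x) (T y)
  · simpa only [Function.comp_apply, map_smul] using hN.2.2 a (T x)

lemma sum_proj_of_support_subset (hN : IsNormC00 N) {m : ℕ} {E : Fin m → Finset ℕ}
    (hE : ∀ i j, i < j → FLt (E i) (E j)) {x : c00} {i₀ : Fin m} (h : x.support ⊆ E i₀) :
    ∑ i, N (proj (E i) x) = N x := by
  rw [Fintype.sum_eq_single i₀ fun j hj => ?_, proj_eq_self_of_support_subset h]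
  rw [proj_eq_zero_of_disjoint ?_ h, hN.map_zero]
  rcases hj.lt_or_gt with hj | hj
  · exact (hE j i₀ hj).disjoint.symm
  · exact (hE i₀ j hj).disjoint

end IsNormC00

namespace IsSchlumprechtNorm

variable {N N' : c00 → ℝ}

theorem le (hN : IsSchlumprechtNorm N) (hN' : IsSchlumprechtNorm N') (x : c00) :
    N x ≤ N' x := by
  induction hk : x.support.card using Nat.strong_induction_on generalizing x with
  | _ k ih =>
  have hbound : ∀ s ∈ insert (supNorm x) (schSet N x), s ≤ max (N' x) ((flog 2)⁻¹ * N x) := by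
    rintro s (rfl | ⟨m, hm, E, hE, rfl⟩)
    · exact le_max_of_le_left ((hN'.2 x).1 (Set.mem_insert _ _))
    by_cases hdeg : ∃ i₀, x.support ⊆ E i₀
    · obtain ⟨i₀, hi₀⟩ := hdeg
      rw [hN.1.sum_proj_of_support_subset hE hi₀]
      exact le_max_of_le_right <|
        mul_le_mul_of_nonneg_right (inv_flog_le_inv_flog_two hm) (hN.1.nonneg x)
    · push Not at hdeg
      refine le_max_of_le_left ?_
      calc (flog m)⁻¹ * ∑ i, N (proj (E i) x)
          ≤ (flog m)⁻¹ * ∑ i, N' (proj (E i) x) := by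
            gcongr with i
            · exact inv_nonneg.2 (zero_lt_one.trans (one_lt_flog hm)).le
            · exact ih _ (hk ▸ card_support_proj_lt (hdeg i)) _ rfl
        _ ≤ N' x := (hN'.2 x).1 (Set.mem_insert_of_mem _ ⟨m, hm, E, hE, rfl⟩)
  rcases le_max_iff.1 ((hN.2 x).2 hbound) with h | h
  · exact h
  · nlinarith [inv_lt_one_of_one_lt₀ (one_lt_flog le_rfl), hN.1.nonneg x, hN'.1.nonneg x]

theorem unique (hN : IsSchlumprechtNorm N) (hN' : IsSchlumprechtNorm N') : N = N' :=
  funext fun x => (hN.le hN' x).antisymm (hN'.le hN x)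

end IsSchlumprechtNorm

noncomputable def signedSpread (θ : ℕ → ℝ) (n : ℕ ↪o ℕ) : c00 →ₗ[ℝ] c00 :=
  Finsupp.linearCombination ℝ fun i => Finsupp.single (n i) (θ i)

namespace signedSpread

variable (θ : ℕ → ℝ) (n : ℕ ↪o ℕ) (x : c00)

lemma apply_self (i : ℕ) : signedSpread θ n x (n i) = θ i * x i := by
  simp [signedSpread, Finsupp.linearCombination_apply, Finsupp.sum_apply, Finsupp.single_apply,
    mul_comm, imp_or]

lemma apply_of_notMem_range {k : ℕ} (hk : k ∉ Set.range n) : signedSpread θ n x k = 0 := by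
  simp only [Set.mem_range, not_exists] at hk
  simp [signedSpread, Finsupp.linearCombination_apply, Finsupp.sum_apply, hk]

lemma injective (hθ : ∀ i, θ i ≠ 0) : Function.Injective (signedSpread θ n) := by
  refine (injective_iff_map_eq_zero _).2 fun x hx => Finsupp.ext fun i => ?_
  simpa [apply_self, hθ i] using congrArg (· (n i)) hx

lemma supNorm_eq (hθ : ∀ i, |θ i| = 1) : supNorm (signedSpread θ n x) = supNorm x := by
  have habs (i : ℕ) : |signedSpread θ n x (n i)| = |x i| := by
    rw [apply_self, abs_mul, hθ, one_mul]
  have hbdd (y : c00) : BddAbove (Set.range fun k => |y k|) :=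
    (Set.range_comp abs y ▸ y.finite_range.image abs).bddAbove
  unfold supNorm
  refine le_antisymm (ciSup_le fun k => ?_)
    (ciSup_le fun i => le_ciSup_of_le (hbdd _) (n i) (habs i).ge)
  by_cases hk : k ∈ Set.range n
  · obtain ⟨i, rfl⟩ := hk
    exact le_ciSup_of_le (hbdd x) i (habs i).le
  · simpa [apply_of_notMem_range _ _ _ hk] using le_ciSup_of_le (hbdd x) 0 (abs_nonneg _)

lemma proj_eq (E : Finset ℕ) :
    proj E (signedSpread θ n x) = signedSpread θ n (proj (E.preimage n n.injective.injOn) x) := by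
  ext k
  by_cases hk : k ∈ Set.range n
  · obtain ⟨i, rfl⟩ := hk
    simp [proj, Finsupp.filter_apply, apply_self]
  · simp [proj, Finsupp.filter_apply, apply_of_notMem_range _ _ _ hk]

end signedSpread

lemma schSet_signedSpread (N : c00 → ℝ) (θ : ℕ → ℝ) (n : ℕ ↪o ℕ) (x : c00) :
    schSet N (signedSpread θ n x) = schSet (N ∘ signedSpread θ n) x := by
  ext s
  constructor
  · rintro ⟨m, hm, E, hE, rfl⟩
    refine ⟨m, hm, fun i => (E i).preimage n n.injective.injOn,
      fun i j hij => (hE i j hij).preimage n, ?_⟩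
    simp only [signedSpread.proj_eq, Function.comp_apply]
  · rintro ⟨m, hm, F, hF, rfl⟩
    refine ⟨m, hm, fun i => (F i).map n.toEmbedding, fun i j hij => (hF i j hij).map n, ?_⟩
    simp only [signedSpread.proj_eq, Function.comp_apply]
    congr! with i
    exact (Finset.preimage_map n.toEmbedding (F i)).symm

lemma IsSchlumprechtNorm.comp_signedSpread {N : c00 → ℝ} (hN : IsSchlumprechtNorm N)
    {θ : ℕ → ℝ} (hθ : ∀ i, |θ i| = 1) (n : ℕ ↪o ℕ) :
    IsSchlumprechtNorm (N ∘ signedSpread θ n) := by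
  refine ⟨hN.1.comp_injective (signedSpread.injective θ n fun i => ?_), fun x => ?_⟩
  · exact ne_of_apply_ne abs (by simp [hθ i])
  · simpa only [Function.comp_apply, signedSpread.supNorm_eq θ n x hθ, schSet_signedSpread]
      using hN.2 (signedSpread θ n x)

/-- the unit vector basis of `(c₀₀, ‖·‖)` is 1-subsymmetric. -/
theorem basis_one_subsymmetric
    (N : c00 → ℝ) (hN : IsSchlumprechtNorm N)
    (a : ℕ →₀ ℝ) (θ : ℕ → ℝ) (hθ : ∀ i, θ i = 1 ∨ θ i = -1)
    (n : ℕ → ℕ) (hn : StrictMono n) :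
    N (a.sum fun i t => (θ i * t) • Finsupp.single (n i) (1 : ℝ)) =
      N (a.sum fun i t => t • Finsupp.single i (1 : ℝ)) := by
  have hθ' (i : ℕ) : |θ i| = 1 := by rcases hθ i with h | h <;> simp [h]
  have key := (hN.comp_signedSpread hθ' (OrderEmbedding.ofStrictMono n hn)).unique hN
  calc _ = N (signedSpread θ (OrderEmbedding.ofStrictMono n hn) a) := by
        simp [signedSpread, Finsupp.linearCombination_apply, Finsupp.smul_single, mul_comm]
    _ = N a := congrFun key a
    _ = _ := by simp [Finsupp.smul_single]
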